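/- Let X be a complete metric space, π a global flow on X, and x a recurrent point of π. Let Y be a complete metric space and φ : X → Y continuous. Then the function g : ℝ → Y defined by g(t) = φ(π(t)x) is a recurrent function, i.e., its translation orbit {T(s)g | s ∈ ℝ} in C(ℝ, Y) with the topology of uniform convergence on bounded intervals is the orbit of a recurrent point of the translation flow. -/
import Mathlib


open Topology Filter

/-- A point `x` is recurrent for the flow `π` if its orbit is precompact and for
every `ε > 0` there is `ℓ > 0` such that every interval of length `ℓ` contains
some `τ` with `d(π(τ)x, x) < ε`. -/
def FlowRecurrent {X : Type*} [MetricSpace X] (π : Flow ℝ X) (x : X) : Prop :=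
  IsCompact (closure (Set.range fun t => π.toFun t x)) ∧
  ∀ ε > 0, ∃ ℓ > 0, ∀ a : ℝ, ∃ τ ∈ Set.Icc a (a + ℓ), dist (π.toFun τ x) x < ε

/-- The translation `T(s)g = g(· + s)` on the space `C(ℝ, Y)` of continuous
functions, endowed with the (compact-open) topology of uniform convergence on
bounded segments. -/
def translFlow {Y : Type*} [TopologicalSpace Y] (s : ℝ) (g : C(ℝ, Y)) : C(ℝ, Y) :=
  g.comp ⟨fun t => t + s, by continuity⟩

/-- A continuous function `g : ℝ → Y` is recurrent if it is a recurrent point of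
the translation flow on `C(ℝ, Y)`: its translation orbit is precompact and for
every neighborhood `U` of `g` there is `ℓ > 0` such that every interval of
length `ℓ` contains `τ` with `T(τ)g ∈ U`. -/
def RecurrentFunction {Y : Type*} [TopologicalSpace Y] (g : C(ℝ, Y)) : Prop :=
  IsCompact (closure (Set.range fun s => translFlow s g)) ∧
  ∀ U ∈ 𝓝 g, ∃ ℓ > 0, ∀ a : ℝ, ∃ τ ∈ Set.Icc a (a + ℓ), translFlow τ g ∈ U

/-- If `x` is a recurrent point of a flow `π` on a complete metric space `X` and
`φ : X → Y` is continuous into a complete metric space `Y`, then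
`t ↦ φ(π(t)x)` is a recurrent function. -/
theorem recurrent_image_function {X Y : Type*} [MetricSpace X] [CompleteSpace X]
    [MetricSpace Y] [CompleteSpace Y] (π : Flow ℝ X) (x : X) (hx : FlowRecurrent π x)
    (φ : X → Y) (hφ : Continuous φ) :
    RecurrentFunction (⟨fun t => φ (π.toFun t x),
      hφ.comp (π.continuous continuous_id continuous_const)⟩ : C(ℝ, Y)) := by
  set g : C(ℝ, Y) := ⟨fun t => φ (π.toFun t x),
    hφ.comp (π.continuous continuous_id continuous_const)⟩ with hg
  let F : C(X × ℝ, Y) := ⟨fun p => φ (π.toFun p.2 p.1),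
    hφ.comp (π.continuous continuous_snd continuous_fst)⟩
  let Φ : C(X, C(ℝ, Y)) := F.curry
  have h1 : ∀ τ : ℝ, translFlow τ g = Φ (π.toFun τ x) := by
    intro τ
    ext t
    simp [g, translFlow, Φ, F, ← π.map_add]
  have hΦx : Φ x = g := by
    ext t
    simp [g, Φ, F]
  obtain ⟨hK, hrec⟩ := hx
  constructor
  · -- precompactness
    have hsub : Set.range (fun s => translFlow s g) ⊆
        Φ '' closure (Set.range fun t => π.toFun t x) := by
      rintro _ ⟨s, rfl⟩
      exact ⟨π.toFun s x, subset_closure ⟨s, rfl⟩, (h1 s).symm⟩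
    have himg : IsCompact (Φ '' closure (Set.range fun t => π.toFun t x)) :=
      hK.image Φ.continuous
    exact himg.of_isClosed_subset isClosed_closure
      ((closure_minimal hsub himg.isClosed))
  · -- recurrence
    intro U hU
    have hU' : Φ ⁻¹' U ∈ 𝓝 x := by
      apply Φ.continuous.continuousAt.preimage_mem_nhds
      rwa [hΦx]
    obtain ⟨ε, hε, hball⟩ := Metric.mem_nhds_iff.mp hU'
    obtain ⟨ℓ, hℓ, hall⟩ := hrec ε hε
    refine ⟨ℓ, hℓ, fun a => ?_⟩
    obtain ⟨τ, hτmem, hτ⟩ := hall a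
    exact ⟨τ, hτmem, by rw [h1]; exact hball hτ⟩
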